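/- In any multipartite tournament, there exists either a 1-Duke, or three distinct 2-Dukes, or four distinct 3-Dukes. -/

import Mathlib

/-- An orientation of a complete multipartite graph: vertices `V`, partite sets
given as fibers of `part : V → ι`, and `peck` the arc relation. Between any two
vertices in different partite sets there is exactly one arc, and there are no
arcs within a partite set. -/
structure MTour (V : Type*) (ι : Type*) where
  part : V → ι
  peck : V → V → Prop
  complete : ∀ u v, part u ≠ part v → peck u v ∨ peck v u
  inter : ∀ u v, peck u v → part u ≠ part v
  asymm : ∀ u v, peck u v → ¬ peck v u

namespace MTour

variable {V ι : Type*}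

/-- There is a directed path of length at most `m` from `d` to `c`. -/
def hasPath (T : MTour V ι) (m : ℕ) (d c : V) : Prop :=
  ∃ k ≤ m, ∃ f : ℕ → V, f 0 = d ∧ f k = c ∧ ∀ i < k, T.peck (f i) (f (i + 1))

/-- `d` is an `m`-Duke: every vertex in a different partite set is reachable
from `d` by a directed path of length at most `m`. -/
def isDuke (T : MTour V ι) (m : ℕ) (d : V) : Prop :=
  ∀ c, T.part c ≠ T.part d → T.hasPath m d c

/-- `d` is an `m`-King: every other vertex is reachable from `d` by a directed
path of length at most `m`. -/
def isKing (T : MTour V ι) (m : ℕ) (d : V) : Prop :=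
  ∀ c, c ≠ d → T.hasPath m d c

/-- The out-degree of a vertex. -/
noncomputable def outDeg (T : MTour V ι) (v : V) : ℕ :=
  Nat.card {w // T.peck v w}

/-- `e` eclipses `d`: same partite set, `e` pecks everything `d` pecks, and
at least one vertex `d` does not peck. -/
def eclipses (T : MTour V ι) (e d : V) : Prop :=
  T.part e = T.part d ∧ (∀ c, T.peck d c → T.peck e c) ∧ ∃ c, T.peck e c ∧ ¬ T.peck d c

/-- `d` is non-eclipsed: no vertex of its partite set eclipses it. -/
def nonEclipsed (T : MTour V ι) (d : V) : Prop :=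
  ∀ e, ¬ T.eclipses e d

/-- Partite set `i` dominates partite set `j`: some vertex of `i` pecks all of `j`. -/
def Dominates (T : MTour V ι) (i j : ι) : Prop :=
  ∃ v, T.part v = i ∧ ∀ w, T.part w = j → T.peck v w

end MTour

/-! The proof orders vertices by the number of vertices they reach in at most two steps, ties broken
by out-degree. A vertex `d` that is maximal in this order among the common in-neighbours of a
set `S` of non-eclipsed vertices is a 3-Duke: a vertex `c` that `d` cannot reach in three steps
would peck `d` and every vertex of `S`, and reach in at most two steps everything `d` does,
contradicting maximality. Without a 1-Duke every vertex has an in-neighbour, so this produces a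
chain `x₄ → x₃ → x₂ → x₁` of 3-Dukes. Either it yields four distinct 3-Dukes or `x₄ = x₁` closes
a directed triangle; if the triangle holds all 3-Dukes, each of its vertices is a 2-Duke. -/

namespace MTour

variable {V ι : Type*} (T : MTour V ι)

def outNbhd (v : V) : Set V := {w | T.peck v w}

def reachTwo (v : V) : Set V := {w | T.peck v w ∨ ∃ u, T.peck v u ∧ T.peck u w}

noncomputable def score (v : V) : ℕ ×ₗ ℕ := toLex ((T.reachTwo v).ncard, (T.outNbhd v).ncard)

def commonInNbrs (S : Set V) : Set V := {u | ∀ w ∈ S, T.peck u w}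

variable {T}

lemma peck_irrefl (v : V) : ¬ T.peck v v := fun h => T.inter v v h rfl

lemma ne_of_peck {u v : V} (h : T.peck u v) : u ≠ v := fun e => T.peck_irrefl v (e ▸ h)

lemma ne_of_peck_of_peck {u v w : V} (huv : T.peck u v) (hvw : T.peck v w) : u ≠ w :=
  fun e => T.asymm v w hvw (e ▸ huv)

lemma self_notMem_reachTwo (v : V) : v ∉ T.reachTwo v := by
  rintro (h | ⟨u, hvu, huv⟩)
  · exact T.peck_irrefl v h
  · exact T.asymm u v huv hvu

section Paths

variable {m n : ℕ} {d u c : V}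

lemma hasPath_self (m : ℕ) (c : V) : T.hasPath m c c :=
  ⟨0, Nat.zero_le m, fun _ => c, rfl, rfl, by simp⟩

lemma hasPath.mono (h : T.hasPath m d c) (hmn : m ≤ n) : T.hasPath n d c := by
  obtain ⟨k, hk, f, hf⟩ := h
  exact ⟨k, hk.trans hmn, f, hf⟩

lemma hasPath.cons (hdu : T.peck d u) (h : T.hasPath m u c) : T.hasPath (m + 1) d c := by
  obtain ⟨k, hk, f, hf0, hfk, hf⟩ := h
  refine ⟨k + 1, by omega, fun i => if i = 0 then d else f (i - 1), by simp, by simpa, ?_⟩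
  rintro (_ | i) hi
  · simpa [hf0] using hdu
  · simpa using hf i (by omega)

lemma hasPath_of_peck (h : T.peck d c) (hm : 1 ≤ m) : T.hasPath m d c :=
  ((hasPath_self 0 c).cons h).mono hm

lemma hasPath_of_peck_of_peck (hdu : T.peck d u) (huc : T.peck u c) (hm : 2 ≤ m) :
    T.hasPath m d c :=
  ((hasPath_of_peck huc le_rfl).cons hdu).mono hm

lemma peck_of_not_hasPath (hc : T.part c ≠ T.part d) (h : ¬ T.hasPath m d c) (hm : 1 ≤ m) :
    T.peck c d :=
  (T.complete c d hc).resolve_right fun hdc => h (hasPath_of_peck hdc hm)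

lemma isDuke_one_of_forall_not_peck {v : V} (h : ∀ u, ¬ T.peck u v) : T.isDuke 1 v :=
  fun c hc => hasPath_of_peck ((T.complete v c (Ne.symm hc)).resolve_right (h c)) le_rfl

lemma peck_or_outNbhd_subset_of_not_hasPath_three (h : ¬ T.hasPath 3 d c) (hdu : T.peck d u) :
    T.peck c u ∨ (T.part u = T.part c ∧ T.outNbhd u ⊆ T.outNbhd c) := by
  by_cases hu : T.part u = T.part c
  · refine Or.inr ⟨hu, fun z huz => ?_⟩
    have hz : T.part c ≠ T.part z := hu ▸ T.inter u z huz
    exact (T.complete c z hz).resolve_right fun hzc =>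
      h ((hasPath_of_peck_of_peck huz hzc le_rfl).cons hdu)
  · exact Or.inl ((T.complete c u (Ne.symm hu)).resolve_right fun huc =>
      h (hasPath_of_peck_of_peck hdu huc (by norm_num)))

end Paths

section Score

variable [Finite V] {d e : V}

lemma score_lt_of_reachTwo_ssubset (h : T.reachTwo d ⊂ T.reachTwo e) : T.score d < T.score e :=
  Prod.Lex.toLex_lt_toLex.2 (Or.inl (Set.ncard_lt_ncard h))

lemma score_lt_of_eclipses (h : T.eclipses e d) : T.score d < T.score e := by
  obtain ⟨-, hsub, z, hez, hdz⟩ := h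
  have hreach : T.reachTwo d ⊆ T.reachTwo e := by
    rintro y (hy | ⟨u, hdu, huy⟩)
    · exact Or.inl (hsub y hy)
    · exact Or.inr ⟨u, hsub u hdu, huy⟩
  have hout : T.outNbhd d ⊂ T.outNbhd e := ⟨hsub, fun h => hdz (h hez)⟩
  exact Prod.Lex.toLex_lt_toLex'.2
    ⟨Set.ncard_le_ncard hreach, fun _ => Set.ncard_lt_ncard hout⟩

variable (T) in
lemma exists_nonEclipsed_outNbhd_superset (c : V) :
    ∃ e, T.part e = T.part c ∧ T.outNbhd c ⊆ T.outNbhd e ∧ T.nonEclipsed e := by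
  obtain ⟨e, ⟨hpart, hsub⟩, hmax⟩ := Set.exists_max_image
    {v | T.part v = T.part c ∧ T.outNbhd c ⊆ T.outNbhd v} T.score (Set.toFinite _)
    ⟨c, rfl, subset_rfl⟩
  refine ⟨e, hpart, hsub, fun e' he' => ?_⟩
  have hmem : T.part e' = T.part c ∧ T.outNbhd c ⊆ T.outNbhd e' :=
    ⟨he'.1.trans hpart, hsub.trans he'.2.1⟩
  exact (hmax e' hmem).not_gt (score_lt_of_eclipses he')

variable {S : Set V}

lemma nonEclipsed_of_isMaxOn_score (hd : d ∈ T.commonInNbrs S)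
    (hmax : IsMaxOn T.score (T.commonInNbrs S) d) : T.nonEclipsed d := fun e he =>
  (isMaxOn_iff.1 hmax e fun w hw => he.2.1 w (hd w hw)).not_gt (score_lt_of_eclipses he)

lemma isDuke_three_of_isMaxOn_score (hS : ∀ w ∈ S, T.nonEclipsed w)
    (hd : d ∈ T.commonInNbrs S) (hmax : IsMaxOn T.score (T.commonInNbrs S) d) :
    T.isDuke 3 d := by
  intro c hc
  by_contra h
  have hcd : T.peck c d := peck_of_not_hasPath hc h (by norm_num)
  have hreach : T.reachTwo d ⊆ T.reachTwo c := by
    rintro y (hdy | ⟨u, hdu, huy⟩)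
    · exact Or.inr ⟨d, hcd, hdy⟩
    · rcases peck_or_outNbhd_subset_of_not_hasPath_three h hdu with hcu | ⟨-, hsub⟩
      · exact Or.inr ⟨u, hcu, huy⟩
      · exact Or.inl (hsub huy)
  have hcS : c ∈ T.commonInNbrs S := by
    intro w hw
    rcases peck_or_outNbhd_subset_of_not_hasPath_three h (hd w hw) with hcw | ⟨hpart, hsub⟩
    · exact hcw
    · exact absurd ⟨hpart.symm, hsub, d, hcd, T.asymm d w (hd w hw)⟩ (hS w hw c)
  have hlt : T.score d < T.score c := score_lt_of_reachTwo_ssubset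
    ((Set.ssubset_iff_of_subset hreach).2 ⟨d, Or.inl hcd, self_notMem_reachTwo d⟩)
  exact (isMaxOn_iff.1 hmax c hcS).not_gt hlt

variable (T) in
lemma exists_isDuke_three_mem_commonInNbrs (hS : ∀ w ∈ S, T.nonEclipsed w)
    (hne : (T.commonInNbrs S).Nonempty) :
    ∃ d ∈ T.commonInNbrs S, T.isDuke 3 d ∧ T.nonEclipsed d := by
  obtain ⟨d, hd, hmax⟩ := Set.exists_max_image _ T.score (Set.toFinite _) hne
  have hmax : IsMaxOn T.score (T.commonInNbrs S) d := isMaxOn_iff.2 hmax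
  exact ⟨d, hd, isDuke_three_of_isMaxOn_score hS hd hmax, nonEclipsed_of_isMaxOn_score hd hmax⟩

variable (T) in
lemma exists_isDuke_three_nonEclipsed [Nonempty V] : ∃ d, T.isDuke 3 d ∧ T.nonEclipsed d := by
  obtain ⟨d, -, hd⟩ := exists_isDuke_three_mem_commonInNbrs T (S := ∅) (by simp)
    ⟨Classical.arbitrary V, by simp [commonInNbrs]⟩
  exact ⟨d, hd⟩

lemma exists_isDuke_three_peck {a : V} (ha : T.nonEclipsed a) (hin : ∃ u, T.peck u a) :
    ∃ d, T.isDuke 3 d ∧ T.nonEclipsed d ∧ T.peck d a := by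
  obtain ⟨d, hd, hduke, hne⟩ :=
    exists_isDuke_three_mem_commonInNbrs T (S := {a}) (by simpa)
      (hin.imp fun u hua => by simpa [commonInNbrs])
  exact ⟨d, hduke, hne, hd a rfl⟩

lemma exists_isDuke_three_peck_peck {a b u : V} (ha : T.nonEclipsed a) (hb : T.nonEclipsed b)
    (hua : T.peck u a) (hub : T.peck u b) : ∃ d, T.isDuke 3 d ∧ T.peck d a ∧ T.peck d b := by
  obtain ⟨d, hd, hduke, -⟩ := exists_isDuke_three_mem_commonInNbrs T (S := {a, b})
    (by simp [ha, hb]) ⟨u, by simp [commonInNbrs, hua, hub]⟩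
  exact ⟨d, hduke, hd a (by simp), hd b (by simp)⟩

end Score

lemma peck_of_peck_of_outNbhd_subset {c₀ c u : V} (hpart : T.part c = T.part c₀)
    (hsub : T.outNbhd c₀ ⊆ T.outNbhd c) (huc : T.peck u c) : T.peck u c₀ :=
  (T.complete u c₀ (hpart ▸ T.inter u c huc)).resolve_right fun hc₀u =>
    T.asymm u c huc (hsub hc₀u)

lemma isDuke_three_of_peck_of_peck {a s c : V} (hca : T.peck c a) (has : T.peck a s)
    (hs : ∀ u, T.peck u c → T.peck s u) : T.isDuke 3 c := by
  intro w hw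
  rcases T.complete c w (Ne.symm hw) with hcw | hwc
  · exact hasPath_of_peck hcw (by norm_num)
  · exact (hasPath_of_peck_of_peck has (hs w hwc) le_rfl).cons hca

/- A vertex `c₀` that `a` cannot reach in two steps may be replaced by a non-eclipsed `c` of its
partite set with more out-arcs; then `c → a → s` and `s` pecks every in-neighbour of `c`, so `c`
would be a 3-Duke other than `a`, `s`, `p`. -/
lemma isDuke_two_of_isDuke_three_mem [Finite V] {a s p : V} (has : T.peck a s)
    (hsp : T.peck s p) (ha : T.nonEclipsed a) (hs : T.nonEclipsed s)
    (hdukes : ∀ y, T.isDuke 3 y → y = a ∨ y = s ∨ y = p) : T.isDuke 2 a := by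
  have hnot_as : ∀ u, T.peck u a → ¬ T.peck u s := fun u hua hus => by
    obtain ⟨d, hd, hda, hds⟩ := exists_isDuke_three_peck_peck ha hs hua hus
    rcases hdukes d hd with rfl | rfl | rfl
    · exact T.peck_irrefl _ hda
    · exact T.peck_irrefl _ hds
    · exact T.asymm _ _ hsp hds
  intro c₀ hc₀
  by_contra h
  obtain ⟨c, hpart, hsub, hc⟩ := exists_nonEclipsed_outNbhd_superset T c₀
  have hca : T.peck c a := hsub (peck_of_not_hasPath hc₀ h one_le_two)
  have hnot_ac : ∀ u, T.peck a u → ¬ T.peck u c := fun u hau huc =>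
    h (hasPath_of_peck_of_peck hau (peck_of_peck_of_outNbhd_subset hpart hsub huc) le_rfl)
  have hcs : T.part c = T.part s := by
    by_contra hne
    rcases T.complete c s hne with hcs | hsc
    · exact hnot_as c hca hcs
    · exact hnot_ac s has hsc
  have hsc : ∀ u, T.peck u c → T.peck s u := by
    intro u huc
    refine (T.complete s u (hcs ▸ (T.inter u c huc).symm)).resolve_right fun hus => ?_
    obtain ⟨d, hd, hds, hdc⟩ := exists_isDuke_three_peck_peck hs hc hus huc
    rcases hdukes d hd with rfl | rfl | rfl
    · exact T.asymm _ _ hca hdc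
    · exact T.peck_irrefl _ hds
    · exact T.asymm _ _ hsp hds
  rcases hdukes c (isDuke_three_of_peck_of_peck hca has hsc) with rfl | rfl | rfl
  · exact T.peck_irrefl _ hca
  · exact T.asymm _ _ has hca
  · exact T.inter _ _ hsp hcs.symm

end MTour

/-- In any multipartite tournament there exists either a 1-Duke, or three
distinct 2-Dukes, or four distinct 3-Dukes. -/
theorem stmt11 {V ι : Type*} [Finite V] [Nonempty V] (T : MTour V ι) :
    (∃ d, T.isDuke 1 d) ∨
    (∃ d₁ d₂ d₃, d₁ ≠ d₂ ∧ d₁ ≠ d₃ ∧ d₂ ≠ d₃ ∧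
      T.isDuke 2 d₁ ∧ T.isDuke 2 d₂ ∧ T.isDuke 2 d₃) ∨
    (∃ d₁ d₂ d₃ d₄, d₁ ≠ d₂ ∧ d₁ ≠ d₃ ∧ d₁ ≠ d₄ ∧ d₂ ≠ d₃ ∧ d₂ ≠ d₄ ∧ d₃ ≠ d₄ ∧
      T.isDuke 3 d₁ ∧ T.isDuke 3 d₂ ∧ T.isDuke 3 d₃ ∧ T.isDuke 3 d₄) := by
  open MTour in
  by_cases h1 : ∃ d, T.isDuke 1 d
  · exact Or.inl h1
  have hin (v : V) : ∃ u, T.peck u v := by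
    by_contra! h
    exact h1 ⟨v, isDuke_one_of_forall_not_peck h⟩
  obtain ⟨x₁, hx₁, hx₁e⟩ := exists_isDuke_three_nonEclipsed T
  obtain ⟨x₂, hx₂, hx₂e, h21⟩ := exists_isDuke_three_peck hx₁e (hin x₁)
  obtain ⟨x₃, hx₃, hx₃e, h32⟩ := exists_isDuke_three_peck hx₂e (hin x₂)
  obtain ⟨x₄, hx₄, -, h43⟩ := exists_isDuke_three_peck hx₃e (hin x₃)
  have n32 := ne_of_peck h32
  have n31 := ne_of_peck_of_peck h32 h21
  have n21 := ne_of_peck h21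
  right
  by_cases h41 : x₄ = x₁
  · have h13 : T.peck x₁ x₃ := h41 ▸ h43
    by_cases hdukes : ∀ y, T.isDuke 3 y → y = x₁ ∨ y = x₂ ∨ y = x₃
    · refine Or.inl ⟨x₃, x₂, x₁, n32, n31, n21, ?_, ?_, ?_⟩
      · exact isDuke_two_of_isDuke_three_mem h32 h21 hx₃e hx₂e (by grind)
      · exact isDuke_two_of_isDuke_three_mem h21 h13 hx₂e hx₁e (by grind)
      · exact isDuke_two_of_isDuke_three_mem h13 h32 hx₁e hx₃e (by grind)
    · push Not at hdukes
      obtain ⟨y, hy, ny1, ny2, ny3⟩ := hdukes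
      exact Or.inr ⟨y, x₃, x₂, x₁, ny3, ny2, ny1, n32, n31, n21, hy, hx₃, hx₂, hx₁⟩
  · exact Or.inr ⟨x₄, x₃, x₂, x₁, ne_of_peck h43, ne_of_peck_of_peck h43 h32, h41, n32, n31, n21,
      hx₄, hx₃, hx₂, hx₁⟩
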